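/- Let E ⊂ ℝ be a Lebesgue measurable set, let l be a density point of E, and let T > l. Then for each κ > 1 there exists l₁ ∈ (l, T), depending on κ and E, such that the sequence defined by l_{m+1} := l + κ^{−m}(l₁ − l) for m ∈ ℕ⁺ satisfies l_m − l_{m+1} ≤ 3 |E ∩ (l_{m+1}, l_m)| for every m ∈ ℕ⁺. -/
import Mathlib


open MeasureTheory Metric

noncomputable section

/-- `ℝ^N` with the Euclidean structure. -/
abbrev Euc (N : ℕ) := EuclideanSpace ℝ (Fin N)

/-- The partial derivative `∂_j f` (via the Fréchet derivative). -/
noncomputable def pd {N : ℕ} (j : Fin N) (f : Euc N → ℝ) (x : Euc N) : ℝ :=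
  fderiv ℝ f x (EuclideanSpace.single j 1)

/-- `div (A(x) ∇ f)(x) = ∑ⱼ ∂ⱼ (∑ₖ aⱼₖ ∂ₖ f)`. -/
noncomputable def divAGrad {N : ℕ} (A : Euc N → Matrix (Fin N) (Fin N) ℝ)
    (f : Euc N → ℝ) (x : Euc N) : ℝ :=
  ∑ j, pd j (fun y => ∑ k, A y j k * pd k f y) x

/-- `A` is symmetric, `lam`-Lipschitz and uniformly elliptic with constant `lam ≥ 1`. -/
def UnifElliptic {N : ℕ} (lam : ℝ) (A : Euc N → Matrix (Fin N) (Fin N) ℝ) : Prop :=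
  1 ≤ lam ∧
  (∀ x j k, A x j k = A x k j) ∧
  (∀ x y j k, |A x j k - A y j k| ≤ lam * ‖x - y‖) ∧
  (∀ (x ξ : Euc N),
    lam⁻¹ * ‖ξ‖ ^ 2 ≤ ∑ j, ∑ k, A x j k * ξ j * ξ k ∧
      ∑ j, ∑ k, A x j k * ξ j * ξ k ≤ lam * ‖ξ‖ ^ 2)

/-- `u` is a classical solution of `∂ₜ u = div(A ∇ u)` on `ℝ^N × (0,∞)`. -/
def IsDiffusionSol {N : ℕ} (A : Euc N → Matrix (Fin N) (Fin N) ℝ)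
    (u : ℝ → Euc N → ℝ) : Prop :=
  ∀ (x : Euc N) (t : ℝ), 0 < t →
    HasDerivAt (fun s => u s x) (divAGrad A (u t) x) t

/-- The square of the `L²(S)` norm. -/
noncomputable def L2sq {N : ℕ} (S : Set (Euc N)) (f : Euc N → ℝ) : ℝ :=
  ∫ x in S, f x ^ 2

/-- `|∇f(x)|²`. -/
noncomputable def gradSq {N : ℕ} (f : Euc N → ℝ) (x : Euc N) : ℝ :=
  ∑ j, pd j f x ^ 2

/-- The square of the `H¹(S)` norm. -/
noncomputable def H1sq {N : ℕ} (S : Set (Euc N)) (f : Euc N → ℝ) : ℝ :=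
  ∫ x in S, (f x ^ 2 + gradSq f x)

/-- The closed cube `Q_r(x₀)`. -/
def cube {N : ℕ} (r : ℝ) (x₀ : Euc N) : Set (Euc N) :=
  {v | ∀ i, |v i - x₀ i| ≤ r}

lemma inner_meas_aux (E : Set ℝ) (a b c d : ℝ)
    (hca : c ≤ a) (hab : a < b) (hbd : b ≤ d) :
    (volume (E ∩ Set.Ioo c d)).toReal - ((d - c) - (b - a)) ≤
      (volume (E ∩ Set.Ioo a b)).toReal := by
  have hIJ : Set.Ioo a b ⊆ Set.Ioo c d := Set.Ioo_subset_Ioo hca hbd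
  have h1 : E ∩ Set.Ioo c d ⊆ (E ∩ Set.Ioo a b) ∪ (Set.Ioo c d \ Set.Ioo a b) := by
    intro x hx
    by_cases h : x ∈ Set.Ioo a b
    · exact Or.inl ⟨hx.1, h⟩
    · exact Or.inr ⟨hx.2, h⟩
  have h2 : volume (E ∩ Set.Ioo c d) ≤
      volume (E ∩ Set.Ioo a b) + volume (Set.Ioo c d \ Set.Ioo a b) :=
    le_trans (measure_mono h1) (measure_union_le _ _)
  have h3 : volume (Set.Ioo c d \ Set.Ioo a b) = ENNReal.ofReal ((d - c) - (b - a)) := by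
    rw [measure_diff hIJ measurableSet_Ioo.nullMeasurableSet measure_Ioo_lt_top.ne,
      Real.volume_Ioo, Real.volume_Ioo, ← ENNReal.ofReal_sub _ (by linarith)]
  have hfI : volume (E ∩ Set.Ioo a b) ≠ ⊤ :=
    (lt_of_le_of_lt (measure_mono Set.inter_subset_right) measure_Ioo_lt_top).ne
  have h4 : (volume (E ∩ Set.Ioo c d)).toReal ≤
      (volume (E ∩ Set.Ioo a b)).toReal + ((d - c) - (b - a)) := by
    have hrhs : volume (E ∩ Set.Ioo a b) + volume (Set.Ioo c d \ Set.Ioo a b) ≠ ⊤ := by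
      rw [h3]
      exact ENNReal.add_ne_top.mpr ⟨hfI, ENNReal.ofReal_ne_top⟩
    have := ENNReal.toReal_mono hrhs h2
    rwa [ENNReal.toReal_add hfI (h3 ▸ ENNReal.ofReal_ne_top), h3,
      ENNReal.toReal_ofReal (by linarith)] at this
  linarith

/-- The telescoping-sequence construction at a density point of a measurable set
`E ⊂ ℝ` (Proposition 2.1 of Phung–Wang): for every `κ > 1` there is `l₁ ∈ (l,T)`
such that the geometric sequence `l_m = l + κ^{-(m-1)}(l₁-l)` satisfies
`l_m − l_{m+1} ≤ 3|E ∩ (l_{m+1}, l_m)|`. -/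
theorem density_point_telescoping_sequence
    (E : Set ℝ) (hE : MeasurableSet E) (l T : ℝ) (hlT : l < T)
    (hdensity : Filter.Tendsto
      (fun δ : ℝ => (volume (E ∩ Set.Ioo (l - δ) (l + δ))).toReal / (2 * δ))
      (nhdsWithin 0 (Set.Ioi 0)) (nhds 1)) :
    ∀ κ : ℝ, 1 < κ →
      ∃ l₁ ∈ Set.Ioo l T, ∀ m : ℕ, 1 ≤ m →
        (l + (l₁ - l) / κ ^ (m - 1)) - (l + (l₁ - l) / κ ^ m) ≤
          3 * (volume (E ∩ Set.Ioo (l + (l₁ - l) / κ ^ m)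
                (l + (l₁ - l) / κ ^ (m - 1)))).toReal := by
  intro κ hκ
  have hκ0 : (0:ℝ) < κ := lt_trans zero_lt_one hκ
  set ε : ℝ := (1 - 1/κ) / 3 with hεdef
  have hκinv : 1/κ < 1 := by rw [div_lt_one hκ0]; exact hκ
  have hε0 : 0 < ε := by rw [hεdef]; linarith
  have hev : ∀ᶠ δ in nhdsWithin 0 (Set.Ioi 0),
      1 - ε < (volume (E ∩ Set.Ioo (l - δ) (l + δ))).toReal / (2 * δ) :=
    hdensity.eventually (eventually_gt_nhds (by linarith))
  obtain ⟨δ₀, hδ₀pos, hδ₀⟩ := Metric.mem_nhdsWithin_iff.mp hev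
  set d : ℝ := min ((T - l)/2) (δ₀/2) with hddef
  have hd0 : 0 < d := lt_min (by linarith) (by linarith)
  have hdT : d < T - l := lt_of_le_of_lt (min_le_left _ _) (by linarith)
  refine ⟨l + d, ⟨by linarith, by linarith⟩, ?_⟩
  intro m hm
  obtain ⟨n, rfl⟩ := Nat.exists_eq_add_of_le hm
  have hmn : 1 + n - 1 = n := by omega
  rw [hmn]
  have hκn : (0:ℝ) < κ ^ n := pow_pos hκ0 n
  set δ : ℝ := d / κ ^ n with hδdef
  have hδ0 : 0 < δ := div_pos hd0 hκn
  have hδd : δ ≤ d := by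
    rw [hδdef]
    exact div_le_self hd0.le (one_le_pow₀ hκ.le)
  have hδlt : δ < δ₀ := lt_of_le_of_lt (hδd.trans (min_le_right _ _)) (by linarith)
  have hratio := hδ₀ ⟨by rw [Metric.mem_ball, Real.dist_eq, sub_zero, abs_of_pos hδ0]; exact hδlt, hδ0⟩
  have hμJ : (1 - ε) * (2 * δ) < (volume (E ∩ Set.Ioo (l - δ) (l + δ))).toReal := by
    have h2δ : 0 < 2 * δ := by linarith
    calc (1 - ε) * (2 * δ)
        < ((volume (E ∩ Set.Ioo (l - δ) (l + δ))).toReal / (2 * δ)) * (2 * δ) := by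
          apply mul_lt_mul_of_pos_right hratio h2δ
      _ = (volume (E ∩ Set.Ioo (l - δ) (l + δ))).toReal := by field_simp
  have hab : l + (l + d - l) / κ ^ (1 + n) = l + δ / κ := by
    rw [hδdef, pow_add, pow_one]
    ring
  have hbb : l + (l + d - l) / κ ^ n = l + δ := by rw [hδdef]; ring
  rw [hab, hbb]
  have hδκ : δ / κ < δ := by
    rw [div_lt_iff₀ hκ0]
    nlinarith
  have key := inner_meas_aux E (l + δ / κ) (l + δ) (l - δ) (l + δ)
    (by nlinarith [div_pos hδ0 hκ0]) (by linarith) le_rfl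
  have hba : (l + δ) - (l + δ / κ) = 3 * ε * δ := by
    rw [hεdef]
    field_simp
    ring
  nlinarith [key, hμJ]
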